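/- arXiv:2012.06804 — 4 statements merged into one kernel-verified Lean document; each statement's English description precedes it below -/
import Mathlib

section
/- Let f : ℝ → ℝ be continuously differentiable, ρ : [0,∞) → ℝ continuous and bounded, and u : [0,∞) → ℝ differentiable with u'(t) = ρ(t)(f(u(t)) - u(t)). Define G(t) = f(u(t)) - u(t). Then G(t) = G(0)·exp(∫₀ᵗ ρ(τ)(f'(u(τ)) - 1) dτ); in particular, sign(G(t)) = sign(G(0)) for all t ≥ 0. -/
/-- Along characteristics, G = f(u) - u satisfies
G(t) = G(0)·exp(∫₀ᵗ ρ(τ)(f'(u(τ)) - 1) dτ); in particular its sign is invariant. -/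
theorem stmt3 (f : ℝ → ℝ) (hf : ContDiff ℝ 1 f)
    (ρ : ℝ → ℝ) (hρc : Continuous ρ) (hρb : ∃ C, ∀ t, |ρ t| ≤ C)
    (u : ℝ → ℝ)
    (hu : ∀ t, 0 ≤ t → HasDerivAt u (ρ t * (f (u t) - u t)) t)
    (G : ℝ → ℝ) (hG : ∀ t, G t = f (u t) - u t) :
    ∀ t, 0 ≤ t →
      G t = G 0 * Real.exp (∫ τ in (0)..t, ρ τ * (deriv f (u τ) - 1)) ∧
      Real.sign (G t) = Real.sign (G 0) := by
  set a : ℝ → ℝ := fun τ => ρ τ * (deriv f (u τ) - 1) with ha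
  have hf' : ∀ x, HasDerivAt f (deriv f x) x := fun x =>
    ((hf.differentiable one_ne_zero) x).hasDerivAt
  have hdf : Continuous (deriv f) := hf.continuous_deriv le_rfl
  have hacontAt : ∀ s, 0 ≤ s → ContinuousAt a s := by
    intro s hs
    exact (hρc.continuousAt).mul
      (((hdf.continuousAt).comp (hu s hs).continuousAt).sub continuousAt_const)
  have hacont : ContinuousOn a (Set.Ici 0) := fun s hs =>
    (hacontAt s hs).continuousWithinAt
  -- G has derivative a s * G s at every s ≥ 0
  have hGd : ∀ s, 0 ≤ s → HasDerivAt G (a s * G s) s := by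
    intro s hs
    have h1 : HasDerivAt (fun t => f (u t) - u t)
        (deriv f (u s) * (ρ s * (f (u s) - u s)) - ρ s * (f (u s) - u s)) s :=
      (((hf' (u s)).comp s (hu s hs))).sub (hu s hs)
    have hGe : G = fun t => f (u t) - u t := funext hG
    rw [hGe]
    convert h1 using 1
    show ρ s * (deriv f (u s) - 1) * (f (u s) - u s) = _
    ring
  -- main claim
  have key : ∀ T, 0 ≤ T → G T = G 0 * Real.exp (∫ τ in (0)..T, a τ) := by
    intro T hT
    set F : ℝ → ℝ := fun t => ∫ τ in (0)..t, a τ with hF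
    have hintT : ∀ s, 0 ≤ s → IntervalIntegrable a MeasureTheory.volume 0 s := by
      intro s hs
      apply ContinuousOn.intervalIntegrable
      apply hacont.mono
      rw [Set.uIcc_of_le hs]
      exact fun x hx => hx.1
    have hFd : ∀ s ∈ Set.Icc (0:ℝ) T, HasDerivWithinAt F (a s) (Set.Ici s) s := by
      intro s hs
      have hmeas : StronglyMeasurableAtFilter a (nhdsWithin s (Set.Ioi s))
          MeasureTheory.volume :=
        ((hacont.mono (fun x (hx : x ∈ Set.Ioi s) => le_of_lt
          (lt_of_le_of_lt hs.1 hx))).stronglyMeasurableAtFilter_nhdsWithin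
          measurableSet_Ioi s)
      have hcw : ContinuousWithinAt a (Set.Ioi s) s :=
        (hacontAt s hs.1).continuousWithinAt
      exact intervalIntegral.integral_hasDerivWithinAt_right (hintT s hs.1) hmeas hcw
    have hFcont : ContinuousOn F (Set.Icc 0 T) := by
      have := intervalIntegral.continuousOn_primitive_interval'
        (μ := MeasureTheory.volume) (hintT T hT) (Set.left_mem_uIcc (a := (0:ℝ)) (b := T))
      rwa [Set.uIcc_of_le hT] at this
    set H : ℝ → ℝ := fun t => G t * Real.exp (-(F t)) with hH
    have hHd : ∀ s ∈ Set.Ico (0:ℝ) T, HasDerivWithinAt H 0 (Set.Ici s) s := by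
      intro s hs
      have h1 : HasDerivWithinAt G (a s * G s) (Set.Ici s) s :=
        (hGd s hs.1).hasDerivWithinAt
      have h2 : HasDerivWithinAt (fun t => Real.exp (-(F t)))
          (Real.exp (-(F s)) * -(a s)) (Set.Ici s) s :=
        ((hFd s ⟨hs.1, hs.2.le⟩).neg).exp
      have := h1.mul h2
      exact this.congr_deriv (by ring)
    have hHcont : ContinuousOn H (Set.Icc 0 T) := by
      apply ContinuousOn.mul
      · exact fun s hs => (hGd s hs.1).continuousAt.continuousWithinAt
      · exact (hFcont.neg).rexp
    have hconst := constant_of_has_deriv_right_zero hHcont hHd T ⟨hT, le_rfl⟩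
    have hF0 : F 0 = 0 := intervalIntegral.integral_same
    have hH0 : H 0 = G 0 := by simp [hH, hF0]
    rw [hH0] at hconst
    have h2 : G T * Real.exp (-(F T)) = G 0 := hconst
    have h3 : G T * Real.exp (-(F T)) * Real.exp (F T) = G 0 * Real.exp (F T) := by
      rw [h2]
    rwa [mul_assoc, ← Real.exp_add, neg_add_cancel, Real.exp_zero, mul_one] at h3
  intro t ht
  refine ⟨key t ht, ?_⟩
  rw [key t ht]
  have hEpos : 0 < Real.exp (∫ τ in (0)..t, a τ) := Real.exp_pos _
  rcases lt_trichotomy (G 0) 0 with h | h | h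
  · rw [Real.sign_of_neg h, Real.sign_of_neg (mul_neg_of_neg_of_pos h hEpos)]
  · simp [h]
  · rw [Real.sign_of_pos h, Real.sign_of_pos (mul_pos h hEpos)]
end

section
/- Let f : ℝ → ℝ be continuously differentiable and u* ∈ ℝ with f(u*) = u*, f'(u*) < 1, and u* the largest solution of f(u) = u. Let ρ : [0,∞) → ℝ be continuous with ρ(t) ≥ 0, and let u : [0,∞) → ℝ satisfy u'(t) = ρ(t)(f(u(t)) - u(t)). If u(0) > u*, then f(u(t)) - u(t) < 0 and u(t) is nonincreasing; in particular u* ≤ u(t) ≤ u(0) for all t ≥ 0. -/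
open Set Filter Topology

/-- If u* is the largest fixed point of f, with f'(u*) < 1, ρ ≥ 0,
u' = ρ(f(u)-u), and u(0) > u*, then f(u(t)) - u(t) < 0, u is nonincreasing,
and u* ≤ u(t) ≤ u(0). -/
theorem stmt4 (f : ℝ → ℝ) (hf : ContDiff ℝ 1 f) (ustar : ℝ)
    (hfix : f ustar = ustar) (hstab : deriv f ustar < 1)
    (hlargest : ∀ w, f w = w → w ≤ ustar)
    (ρ : ℝ → ℝ) (hρc : Continuous ρ) (hρ : ∀ t, 0 ≤ t → 0 ≤ ρ t)
    (u : ℝ → ℝ)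
    (hu : ∀ t, 0 ≤ t → HasDerivAt u (ρ t * (f (u t) - u t)) t)
    (h0 : u 0 > ustar) :
    (∀ t, 0 ≤ t → f (u t) - u t < 0) ∧
    (∀ s t, 0 ≤ s → s ≤ t → u t ≤ u s) ∧
    (∀ t, 0 ≤ t → ustar ≤ u t ∧ u t ≤ u 0) := by
  have hucont : ∀ t, 0 ≤ t → ContinuousAt u t := fun t ht => (hu t ht).continuousAt
  have hfd : Differentiable ℝ f := hf.differentiable one_ne_zero
  -- Lemma A : for w > ustar, f w - w < 0
  have signA : ∀ w, ustar < w → f w - w < 0 := by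
    intro w hw
    by_contra hge
    push_neg at hge
    have hg : HasDerivAt (fun x => f x - x) (deriv f ustar - 1) ustar :=
      (hfd ustar).hasDerivAt.sub (hasDerivAt_id ustar)
    have hslope := hasDerivAt_iff_tendsto_slope.1 hg
    have hslope' : Tendsto (slope (fun x => f x - x) ustar) (𝓝[>] ustar)
        (𝓝 (deriv f ustar - 1)) :=
      hslope.mono_left (nhdsWithin_mono _ fun x hx => ne_of_gt hx)
    have hneg : ∀ᶠ x in 𝓝[>] ustar, slope (fun x => f x - x) ustar x < 0 :=
      hslope'.eventually (eventually_lt_nhds (by linarith))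
    have hmem : ∀ᶠ x in 𝓝[>] ustar, x ∈ Ioo ustar w := by
      filter_upwards [self_mem_nhdsWithin,
        eventually_nhdsWithin_of_eventually_nhds (eventually_lt_nhds hw)] with x h1 h2
      exact ⟨h1, h2⟩
    obtain ⟨x, hxs, hx⟩ := (hneg.and hmem).exists
    have hxpos : 0 < x - ustar := sub_pos.2 hx.1
    have hgx : f x - x < 0 := by
      have : ((f x - x) - (f ustar - ustar)) / (x - ustar) < 0 := by
        simpa [slope_def_field] using hxs
      rw [hfix, sub_self, sub_zero] at this
      rcases div_neg_iff.1 this with ⟨_, h⟩ | ⟨h, _⟩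
      · linarith
      · exact h
    have hcont : ContinuousOn (fun x => f x - x) (Icc x w) :=
      (hf.continuous.sub continuous_id).continuousOn
    have h0mem : (0 : ℝ) ∈ Icc (f x - x) (f w - w) := ⟨hgx.le, hge⟩
    obtain ⟨z, hz, hz0⟩ := intermediate_value_Icc hx.2.le hcont h0mem
    have hzfix : f z = z := by linarith [sub_eq_zero.1 hz0]
    have := hlargest z hzfix
    linarith [hz.1, hx.1]
  -- Lemma B : u stays above ustar
  have hB : ∀ t, 0 ≤ t → ustar < u t := by
    by_contra hc
    push_neg at hc
    obtain ⟨T, hT0, hTle⟩ := hc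
    set S : Set ℝ := {t | 0 ≤ t ∧ u t ≤ ustar} with hSdef
    have hSne : S.Nonempty := ⟨T, hT0, hTle⟩
    have hSbd : BddBelow S := ⟨0, fun x hx => hx.1⟩
    set t₁ := sInf S with ht₁def
    have ht₁0 : 0 ≤ t₁ := le_csInf hSne fun x hx => hx.1
    have hclos : t₁ ∈ closure S := csInf_mem_closure hSne hSbd
    haveI : (𝓝[S] t₁).NeBot := mem_closure_iff_nhdsWithin_neBot.1 hclos
    have hle : u t₁ ≤ ustar := by
      refine le_of_tendsto ((hucont t₁ ht₁0).continuousWithinAt (s := S)).tendsto ?_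
      filter_upwards [self_mem_nhdsWithin] with x hx
      exact hx.2
    have ht₁pos : 0 < t₁ := by
      rcases ht₁0.lt_or_eq with h | h
      · exact h
      · rw [← h] at hle; linarith
    have hlt : ∀ t, 0 ≤ t → t < t₁ → ustar < u t := fun t ht htlt =>
      lt_of_not_ge fun hle' => absurd (csInf_le hSbd ⟨ht, hle'⟩) (not_le.2 htlt)
    have hge2 : ustar ≤ u t₁ := by
      refine ge_of_tendsto ((hucont t₁ ht₁0).continuousWithinAt (s := Iio t₁)).tendsto ?_
      filter_upwards [self_mem_nhdsWithin,
        eventually_nhdsWithin_of_eventually_nhds (eventually_gt_nhds ht₁pos)] with x hx1 hx2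
      exact (hlt x hx2.le hx1).le
    have hueq : u t₁ = ustar := le_antisymm hle hge2
    have hucontOn : ContinuousOn u (Icc 0 t₁) := fun t ht => (hucont t ht.1).continuousWithinAt
    have hlb : ∀ t ∈ Icc 0 t₁, ustar ≤ u t := by
      intro t ht
      rcases ht.2.lt_or_eq with h | h
      · exact (hlt t ht.1 h).le
      · rw [h, hueq]
    obtain ⟨z, hz, hzmax⟩ := isCompact_Icc.exists_isMaxOn (nonempty_Icc.2 ht₁0) hucontOn
    set M := u z with hMdef
    have hub : ∀ t ∈ Icc 0 t₁, u t ≤ M := fun t ht => hzmax ht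
    have hustarM : ustar ≤ M := hueq ▸ hub t₁ ⟨ht₁0, le_rfl⟩
    obtain ⟨r, hr, hrmax⟩ := isCompact_Icc.exists_isMaxOn (nonempty_Icc.2 ht₁0)
      (hρc.continuousOn : ContinuousOn ρ (Icc 0 t₁))
    set R := ρ r with hRdef
    have hR0 : 0 ≤ R := hρ r hr.1
    set q : ℝ → ℝ := fun t => min (max t 0) t₁ with hqdef
    have hqmem : ∀ t, q t ∈ Icc 0 t₁ := fun t =>
      ⟨le_min (le_max_right t 0) ht₁0, min_le_right _ _⟩
    have hqeq : ∀ t ∈ Icc 0 t₁, q t = t := fun t ht => by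
      simp [hqdef, max_eq_left ht.1, min_eq_left ht.2]
    set ρ' : ℝ → ℝ := fun t => ρ (q t) with hρ'def
    have hρ'le : ∀ t, ρ' t ≤ R := fun t => hrmax (hqmem t)
    have hρ'0 : ∀ t, 0 ≤ ρ' t := fun t => hρ _ (hqmem t).1
    obtain ⟨d, hd, hdmax⟩ := isCompact_Icc.exists_isMaxOn (nonempty_Icc.2 hustarM)
      ((hf.continuous_deriv le_rfl).abs.continuousOn :
        ContinuousOn (fun x => |deriv f x|) (Icc ustar M))
    set D := |deriv f d| with hDdef
    have hD : ∀ x ∈ Icc ustar M, |deriv f x| ≤ D := fun x hx => hdmax hx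
    have hD0 : 0 ≤ D := abs_nonneg _
    set v : ℝ → ℝ → ℝ := fun t x => ρ' t * (f x - x) with hvdef
    set K := (R * (D + 1)).toNNReal with hKdef
    have hv : ∀ t, LipschitzOnWith K (v t) (Icc ustar M) := by
      intro t
      apply Convex.lipschitzOnWith_of_nnnorm_deriv_le
        (fun x _ => (((hfd x).sub differentiableAt_id).const_mul (ρ' t)))
        ?_ (convex_Icc _ _)
      intro x hx
      have hdv : HasDerivAt (fun y => ρ' t * (f - id : ℝ → ℝ) y) (ρ' t * (deriv f x - 1)) x :=
        (((hfd x).hasDerivAt.sub (hasDerivAt_id x)).const_mul (ρ' t))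
      rw [hdv.deriv, ← norm_toNNReal, hKdef]
      apply Real.toNNReal_mono
      have h1 : |deriv f x - 1| ≤ D + 1 := by
        calc |deriv f x - 1| ≤ |deriv f x| + |(1:ℝ)| := abs_sub _ _
        _ ≤ D + 1 := by simp [hD x hx]
      rw [Real.norm_eq_abs, abs_mul, abs_of_nonneg (hρ'0 t)]
      exact mul_le_mul (hρ'le t) h1 (abs_nonneg _) hR0
    have heq := ODE_solution_unique_of_mem_Icc_left (v := v) (s := fun _ => Icc ustar M)
      (K := K) (fun t _ => hv t) (a := 0) (b := t₁) hucontOn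
      (fun t ht => by
        have hq' : ρ' t = ρ t := by rw [hρ'def]; simp only []; rw [hqeq t ⟨ht.1.le, ht.2⟩]
        have := (hu t ht.1.le).hasDerivWithinAt (s := Iic t)
        simpa [hvdef, hq'] using this)
      (fun t ht => ⟨hlb t (Ioc_subset_Icc_self ht), hub t (Ioc_subset_Icc_self ht)⟩)
      (continuousOn_const : ContinuousOn (fun _ => ustar) (Icc 0 t₁))
      (fun t ht => by
        have : v t ustar = 0 := by simp [hvdef, hfix]
        simpa [this] using (hasDerivWithinAt_const t (Iic t) ustar))
      (fun t _ => ⟨le_rfl, hustarM⟩) hueq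
    have := heq ⟨le_rfl, ht₁0⟩
    simp only at this
    linarith
  have part1 : ∀ t, 0 ≤ t → f (u t) - u t < 0 := fun t ht => signA _ (hB t ht)
  have hanti : AntitoneOn u (Ici 0) := by
    apply antitoneOn_of_deriv_nonpos (convex_Ici 0)
      (fun t ht => (hucont t ht).continuousWithinAt)
    · intro x hx
      rw [interior_Ici] at hx
      exact ((hu x (le_of_lt hx)).differentiableAt).differentiableWithinAt
    · intro x hx
      rw [interior_Ici] at hx
      rw [(hu x hx.le).deriv]
      exact mul_nonpos_of_nonneg_of_nonpos (hρ x hx.le) (part1 x hx.le).le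
  exact ⟨part1, fun s t hs hst => hanti hs (hs.trans hst) hst,
    fun t ht => ⟨(hB t ht).le, hanti self_mem_Ici ht ht⟩⟩
end

section
/- Let f : ℝ → ℝ be continuously differentiable with exactly one fixed point u* (i.e., f(u) = u iff u = u*) satisfying f'(u*) < 1. Let ρ : [0,∞) → ℝ be continuous with ρ ≥ 0 and let u : [0,∞) → ℝ satisfy u'(t) = ρ(t)(f(u(t)) - u(t)). Then min{u(0), u*} ≤ u(t) ≤ max{u(0), u*} for all t ≥ 0. -/
open Set Filter Topology

/-- Barrier lemma: if the derivative is nonpositive whenever `v` exceeds `M`,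
then `v` stays below `M` on `[0,∞)`. -/
lemma stay_le (v v' : ℝ → ℝ) (M : ℝ)
    (hv : ∀ t, 0 ≤ t → HasDerivAt v (v' t) t)
    (hsign : ∀ t, 0 ≤ t → M < v t → v' t ≤ 0)
    (h0 : v 0 ≤ M) : ∀ t, 0 ≤ t → v t ≤ M := by
  intro t ht
  by_contra h
  push_neg at h
  have ht0 : 0 < t := by
    rcases lt_or_eq_of_le ht with h' | h'
    · exact h'
    · exact absurd h0 (by rw [h']; exact not_le.mpr h)
  have hcont : ContinuousOn v (Icc 0 t) :=
    fun x hx => ((hv x hx.1).continuousAt).continuousWithinAt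
  set S : Set ℝ := Icc 0 t ∩ v ⁻¹' (Iic M) with hS
  have h0S : (0:ℝ) ∈ S := ⟨⟨le_refl 0, ht⟩, h0⟩
  have hbdd : BddAbove S := ⟨t, fun r hr => hr.1.2⟩
  have hclosed : IsClosed S := hcont.preimage_isClosed_of_isClosed isClosed_Icc isClosed_Iic
  have hsmem : sSup S ∈ S := hclosed.csSup_mem ⟨0, h0S⟩ hbdd
  set s := sSup S with hsdef
  have hs0 : 0 ≤ s := hsmem.1.1
  have hst : s ≤ t := hsmem.1.2
  have hvs : v s ≤ M := hsmem.2
  have hslt : s < t := by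
    rcases lt_or_eq_of_le hst with h' | h'
    · exact h'
    · exfalso; rw [h'] at hvs; exact not_le.mpr h hvs
  have hgt : ∀ r ∈ Ioc s t, M < v r := by
    intro r hr
    by_contra hle
    push_neg at hle
    have : r ∈ S := ⟨⟨le_trans hs0 hr.1.le, hr.2⟩, hle⟩
    exact absurd (le_csSup hbdd this) (not_le.mpr hr.1)
  have hanti : AntitoneOn v (Icc s t) := by
    apply antitoneOn_of_deriv_nonpos (convex_Icc s t)
    · exact hcont.mono (Icc_subset_Icc hs0 le_rfl)
    · intro x hx
      rw [interior_Icc] at hx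
      exact ((hv x (le_trans hs0 hx.1.le)).differentiableAt).differentiableWithinAt
    · intro x hx
      rw [interior_Icc] at hx
      have hx0 : 0 ≤ x := le_trans hs0 hx.1.le
      rw [(hv x hx0).deriv]
      exact hsign x hx0 (hgt x ⟨hx.1, hx.2.le⟩)
  have := hanti ⟨le_rfl, hst⟩ ⟨hst, le_rfl⟩ hst
  exact not_le.mpr h (this.trans hvs)

/-- Sign of `f w - w` around the unique stable fixed point. -/
lemma g_sign (f : ℝ → ℝ) (hf : ContDiff ℝ 1 f) (ustar : ℝ)
    (hfix : ∀ w, f w = w ↔ w = ustar) (hstab : deriv f ustar < 1) :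
    (∀ w, ustar < w → f w - w < 0) ∧ (∀ w, w < ustar → 0 < f w - w) := by
  set g : ℝ → ℝ := fun w => f w - w with hg
  have hgc : Continuous g := (hf.continuous).sub continuous_id
  have hgstar : g ustar = 0 := by
    have := (hfix ustar).mpr rfl
    simp [hg, this]
  have hgzero : ∀ w, g w = 0 ↔ w = ustar := by
    intro w; constructor
    · intro hw; exact (hfix w).mp (by simpa [hg, sub_eq_zero] using hw)
    · intro hw; rw [hw]; exact hgstar
  have hder : HasDerivAt g (deriv f ustar - 1) ustar := by
    have hfd : HasDerivAt f (deriv f ustar) ustar :=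
      (hf.differentiable one_ne_zero ustar).hasDerivAt
    exact hfd.sub (hasDerivAt_id' ustar)
  have hd : deriv f ustar - 1 < 0 := by linarith
  have hslope : Tendsto (slope g ustar) (𝓝[≠] ustar) (𝓝 (deriv f ustar - 1)) :=
    hasDerivAt_iff_tendsto_slope.mp hder
  have hev : ∀ᶠ x in 𝓝[≠] ustar, slope g ustar x < 0 :=
    hslope.eventually (Filter.Tendsto.eventually_lt_const hd tendsto_id |>.mono (fun _ h => h))
  have hslope_eq : ∀ x, x ≠ ustar → slope g ustar x = g x / (x - ustar) := by
    intro x _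
    rw [slope_def_field, hgstar, sub_zero]
  constructor
  · -- g < 0 on (ustar, ∞)
    intro w hw
    by_contra hge
    push_neg at hge
    have hgw : 0 < g w := lt_of_le_of_ne hge (fun h => (ne_of_gt hw) ((hgzero w).mp h.symm))
    -- find x ∈ (ustar, w) with g x < 0
    have hevr : ∀ᶠ x in 𝓝[>] ustar, slope g ustar x < 0 :=
      hev.filter_mono (nhdsWithin_mono _ (fun x hx => ne_of_gt hx))
    have hmem : Ioo ustar w ∈ 𝓝[>] ustar := Ioo_mem_nhdsGT_of_mem ⟨le_rfl, hw⟩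
    obtain ⟨x, hx1, hx2⟩ := (hevr.and (eventually_of_mem hmem (fun x hx => hx))).exists
    have hxne : x ≠ ustar := ne_of_gt hx2.1
    have hgx : g x < 0 := by
      have := hx1
      rw [hslope_eq x hxne] at this
      have hpos : 0 < x - ustar := sub_pos.mpr hx2.1
      rcases div_neg_iff.mp this with ⟨h1, h2⟩ | ⟨h1, h2⟩
      · linarith
      · exact h1
    -- IVT on [x, w]
    have hxw : x ≤ w := hx2.2.le
    have : (0:ℝ) ∈ Icc (g x) (g w) := ⟨hgx.le, hgw.le⟩
    obtain ⟨z, hz, hz0⟩ := intermediate_value_Icc hxw (hgc.continuousOn) this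
    have : z = ustar := (hgzero z).mp hz0
    exact absurd (this ▸ hz.1) (not_le.mpr hx2.1)
  · -- g > 0 on (-∞, ustar)
    intro w hw
    by_contra hle
    push_neg at hle
    have hgw : g w < 0 := lt_of_le_of_ne hle (fun h => (ne_of_lt hw) ((hgzero w).mp h))
    have hevl : ∀ᶠ x in 𝓝[<] ustar, slope g ustar x < 0 :=
      hev.filter_mono (nhdsWithin_mono _ (fun x hx => ne_of_lt hx))
    have hmem : Ioo w ustar ∈ 𝓝[<] ustar := Ioo_mem_nhdsLT_of_mem ⟨hw, le_rfl⟩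
    obtain ⟨x, hx1, hx2⟩ := (hevl.and (eventually_of_mem hmem (fun x hx => hx))).exists
    have hxne : x ≠ ustar := ne_of_lt hx2.2
    have hgx : 0 < g x := by
      have := hx1
      rw [hslope_eq x hxne] at this
      have hneg : x - ustar < 0 := sub_neg.mpr hx2.2
      rcases div_neg_iff.mp this with ⟨h1, h2⟩ | ⟨h1, h2⟩
      · exact h1
      · linarith
    have hwx : w ≤ x := hx2.1.le
    have : (0:ℝ) ∈ Icc (g w) (g x) := ⟨hgw.le, hgx.le⟩
    obtain ⟨z, hz, hz0⟩ := intermediate_value_Icc hwx (hgc.continuousOn) this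
    have : z = ustar := (hgzero z).mp hz0
    exact absurd (this ▸ hz.2) (not_le.mpr hx2.2)

/-- With a single stable fixed point u* of f, solutions of u' = ρ(f(u)-u)
with ρ ≥ 0 stay between u(0) and u*. -/
theorem stmt5 (f : ℝ → ℝ) (hf : ContDiff ℝ 1 f) (ustar : ℝ)
    (hfix : ∀ w, f w = w ↔ w = ustar) (hstab : deriv f ustar < 1)
    (ρ : ℝ → ℝ) (hρc : Continuous ρ) (hρ : ∀ t, 0 ≤ t → 0 ≤ ρ t)
    (u : ℝ → ℝ)
    (hu : ∀ t, 0 ≤ t → HasDerivAt u (ρ t * (f (u t) - u t)) t) :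
    ∀ t, 0 ≤ t → min (u 0) ustar ≤ u t ∧ u t ≤ max (u 0) ustar := by
  obtain ⟨hneg, hpos⟩ := g_sign f hf ustar hfix hstab
  intro t ht
  constructor
  · -- lower bound via -u
    have := stay_le (fun r => -u r) (fun r => -(ρ r * (f (u r) - u r)))
      (-(min (u 0) ustar))
      (fun r hr => (hu r hr).neg)
      (fun r hr hlt => by
        beta_reduce at hlt ⊢
        have hult : u r < min (u 0) ustar := by linarith
        have : u r < ustar := lt_of_lt_of_le hult (min_le_right _ _)
        have hg : 0 < f (u r) - u r := hpos _ this
        have : 0 ≤ ρ r * (f (u r) - u r) := mul_nonneg (hρ r hr) hg.le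
        linarith)
      (by simp [min_le_left]) t ht
    beta_reduce at this
    linarith
  · exact stay_le u (fun r => ρ r * (f (u r) - u r)) (max (u 0) ustar)
      hu
      (fun r hr hlt => by
        have : ustar < u r := lt_of_le_of_lt (le_max_right _ _) hlt
        exact mul_nonpos_of_nonneg_of_nonpos (hρ r hr) (hneg _ this).le)
      (le_max_left _ _) t ht
end

section
/- Let f : ℝ² → ℝ be C¹ with f_u ≤ 0 everywhere in its second argument, M > 0, and suppose there is a continuous φ : [0,M] → ℝ with f(ρ, φ(ρ)) = φ(ρ) for all ρ ∈ [0,M]. Let ρ : [0,T) → [0,M] be continuous and u : [0,T) → ℝ differentiable with u'(t) = ρ(t)(f(ρ(t), u(t)) - u(t)). Then min{u(0), min φ} ≤ u(t) ≤ max{u(0), max φ} for all t ∈ [0,T), where min φ and max φ denote the minimum and maximum of φ on [0,M]. -/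
/-- Bounds on velocity for general relaxation f(ρ,u) with f_u ≤ 0, given an
equilibrium curve φ on [0,M]: min{u(0), min φ} ≤ u(t) ≤ max{u(0), max φ}. -/
theorem stmt7 (f fu : ℝ → ℝ → ℝ)
    (hfc : Continuous fun p : ℝ × ℝ => f p.1 p.2)
    (hfuc : Continuous fun p : ℝ × ℝ => fu p.1 p.2)
    (hderiv : ∀ r v : ℝ, HasDerivAt (f r) (fu r v) v)
    (hfu : ∀ r v : ℝ, fu r v ≤ 0)
    (M : ℝ) (hM : 0 < M)
    (φ : ℝ → ℝ) (hφc : ContinuousOn φ (Set.Icc 0 M))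
    (hφ : ∀ r ∈ Set.Icc (0:ℝ) M, f r (φ r) = φ r)
    (T : ℝ) (hT : 0 < T)
    (ρ : ℝ → ℝ) (hρc : ContinuousOn ρ (Set.Ico 0 T))
    (hρ : ∀ t ∈ Set.Ico (0:ℝ) T, ρ t ∈ Set.Icc (0:ℝ) M)
    (u : ℝ → ℝ)
    (hu : ∀ t ∈ Set.Ico (0:ℝ) T,
      HasDerivAt u (ρ t * (f (ρ t) (u t) - u t)) t) :
    ∀ t ∈ Set.Ico (0:ℝ) T,
      min (u 0) (sInf (φ '' Set.Icc 0 M)) ≤ u t ∧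
      u t ≤ max (u 0) (sSup (φ '' Set.Icc 0 M)) := by
  intro s hs
  obtain ⟨hs0, hsT⟩ := hs
  set K := max (u 0) (sSup (φ '' Set.Icc 0 M)) with hKdef
  set m := min (u 0) (sInf (φ '' Set.Icc 0 M)) with hmdef
  have hcomp : IsCompact (φ '' Set.Icc 0 M) := isCompact_Icc.image_of_continuousOn hφc
  have hφK : ∀ r ∈ Set.Icc (0:ℝ) M, φ r ≤ K := fun r hr =>
    le_trans (le_csSup hcomp.bddAbove (Set.mem_image_of_mem φ hr)) (le_max_right _ _)
  have hmφ : ∀ r ∈ Set.Icc (0:ℝ) M, m ≤ φ r := fun r hr =>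
    le_trans (min_le_right _ _) (csInf_le hcomp.bddBelow (Set.mem_image_of_mem φ hr))
  have hanti : ∀ r : ℝ, Antitone (f r) := fun r =>
    antitone_of_deriv_nonpos (fun v => (hderiv r v).differentiableAt)
      (fun v => by rw [(hderiv r v).deriv]; exact hfu r v)
  have hucont : ContinuousOn u (Set.Icc 0 s) := fun t ht =>
    ((hu t ⟨ht.1, lt_of_le_of_lt ht.2 hsT⟩).continuousAt).continuousWithinAt
  constructor
  · -- lower bound
    by_contra h
    push_neg at h
    set A := {t ∈ Set.Icc (0:ℝ) s | m ≤ u t} with hAdef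
    have hA0 : (0:ℝ) ∈ A := ⟨⟨le_refl 0, hs0⟩, min_le_left _ _⟩
    have hAne : A.Nonempty := ⟨0, hA0⟩
    have hAbdd : BddAbove A := ⟨s, fun t ht => ht.1.2⟩
    have hAclosed : IsClosed A := by
      have : A = Set.Icc 0 s ∩ u ⁻¹' Set.Ici m := rfl
      rw [this]
      exact hucont.preimage_isClosed_of_isClosed isClosed_Icc isClosed_Ici
    have ht0A : sSup A ∈ A := hAclosed.csSup_mem hAne hAbdd
    set t0 := sSup A with ht0def
    have ht0s : t0 < s := by
      rcases lt_or_eq_of_le ht0A.1.2 with h' | h'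
      · exact h'
      · exfalso; rw [h'] at ht0A; exact absurd ht0A.2 (not_le.2 h)
    have hlt : ∀ t ∈ Set.Ioc t0 s, u t < m := by
      intro t ht
      by_contra hle
      push_neg at hle
      exact absurd (le_csSup hAbdd ⟨⟨le_trans ht0A.1.1 ht.1.le, ht.2⟩, hle⟩) (not_le.2 ht.1)
    have hmono : MonotoneOn u (Set.Icc t0 s) := by
      apply monotoneOn_of_deriv_nonneg (convex_Icc t0 s)
      · exact hucont.mono (Set.Icc_subset_Icc ht0A.1.1 le_rfl)
      · intro x hx
        rw [interior_Icc] at hx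
        have hxT : x ∈ Set.Ico (0:ℝ) T :=
          ⟨le_trans ht0A.1.1 hx.1.le, lt_trans hx.2 hsT⟩
        exact ((hu x hxT).differentiableAt).differentiableWithinAt
      · intro x hx
        rw [interior_Icc] at hx
        have hxT : x ∈ Set.Ico (0:ℝ) T :=
          ⟨le_trans ht0A.1.1 hx.1.le, lt_trans hx.2 hsT⟩
        rw [(hu x hxT).deriv]
        have hρx := hρ x hxT
        have hum : u x < m := hlt x ⟨hx.1, hx.2.le⟩
        have h1 : φ (ρ x) ≤ f (ρ x) (u x) := by
          have := hanti (ρ x) (le_of_lt (lt_of_lt_of_le hum (hmφ _ hρx)))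
          rwa [hφ _ hρx] at this
        have h2 : u x ≤ f (ρ x) (u x) :=
          le_trans (le_of_lt (lt_of_lt_of_le hum (hmφ _ hρx))) h1
        exact mul_nonneg hρx.1 (by linarith)
    have := hmono (Set.left_mem_Icc.2 ht0s.le) (Set.right_mem_Icc.2 ht0s.le) ht0s.le
    have := ht0A.2
    linarith
  · -- upper bound
    by_contra h
    push_neg at h
    set A := {t ∈ Set.Icc (0:ℝ) s | u t ≤ K} with hAdef
    have hA0 : (0:ℝ) ∈ A := ⟨⟨le_refl 0, hs0⟩, le_max_left _ _⟩
    have hAne : A.Nonempty := ⟨0, hA0⟩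
    have hAbdd : BddAbove A := ⟨s, fun t ht => ht.1.2⟩
    have hAclosed : IsClosed A := by
      have : A = Set.Icc 0 s ∩ u ⁻¹' Set.Iic K := rfl
      rw [this]
      exact hucont.preimage_isClosed_of_isClosed isClosed_Icc isClosed_Iic
    have ht0A : sSup A ∈ A := hAclosed.csSup_mem hAne hAbdd
    set t0 := sSup A with ht0def
    have ht0s : t0 < s := by
      rcases lt_or_eq_of_le ht0A.1.2 with h' | h'
      · exact h'
      · exfalso; rw [h'] at ht0A; exact absurd ht0A.2 (not_le.2 h)
    have hgt : ∀ t ∈ Set.Ioc t0 s, K < u t := by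
      intro t ht
      by_contra hle
      push_neg at hle
      exact absurd (le_csSup hAbdd ⟨⟨le_trans ht0A.1.1 ht.1.le, ht.2⟩, hle⟩) (not_le.2 ht.1)
    have hmono : AntitoneOn u (Set.Icc t0 s) := by
      apply antitoneOn_of_deriv_nonpos (convex_Icc t0 s)
      · exact hucont.mono (Set.Icc_subset_Icc ht0A.1.1 le_rfl)
      · intro x hx
        rw [interior_Icc] at hx
        have hxT : x ∈ Set.Ico (0:ℝ) T :=
          ⟨le_trans ht0A.1.1 hx.1.le, lt_trans hx.2 hsT⟩
        exact ((hu x hxT).differentiableAt).differentiableWithinAt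
      · intro x hx
        rw [interior_Icc] at hx
        have hxT : x ∈ Set.Ico (0:ℝ) T :=
          ⟨le_trans ht0A.1.1 hx.1.le, lt_trans hx.2 hsT⟩
        rw [(hu x hxT).deriv]
        have hρx := hρ x hxT
        have hum : K < u x := hgt x ⟨hx.1, hx.2.le⟩
        have h1 : f (ρ x) (u x) ≤ φ (ρ x) := by
          have := hanti (ρ x) (le_of_lt (lt_of_le_of_lt (hφK _ hρx) hum))
          rwa [hφ _ hρx] at this
        have h2 : f (ρ x) (u x) ≤ u x :=
          le_trans h1 (le_of_lt (lt_of_le_of_lt (hφK _ hρx) hum))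
        exact mul_nonpos_of_nonneg_of_nonpos hρx.1 (by linarith)
    have := hmono (Set.left_mem_Icc.2 ht0s.le) (Set.right_mem_Icc.2 ht0s.le) ht0s.le
    have := ht0A.2
    linarith
end
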